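/- Fix an integer k ≥ 0, n ≥ 1, and λ, μ ∈ ℝ. Suppose the family (c_{r,s,t}) (indexed by r+s+t = k, extended by zero) satisfies the recurrence system (i)–(ii). Then for every 0 ≤ i ≤ k, provided 2j + n(2λ−1) ≠ 0 for 1 ≤ j ≤ i: c_{i,k−i,0} = (−1)^i·C(k,i)·(∏_{j=1}^{i}(k−j+nμ) / ∏_{j=1}^{i}(2j+n(2λ−1)))·c_{0,k,0}; and symmetrically, provided 2j + n(2μ−1) ≠ 0 for 1 ≤ j ≤ i: c_{0,k−i,i} = (−1)^i·C(k,i)·(∏_{j=1}^{i}(k−j+nλ) / ∏_{j=1}^{i}(2j+n(2μ−1)))·c_{0,k,0}. -/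
import Mathlib

lemma rec_aux (k n : ℕ) (lam mu : ℝ) (c : ℤ → ℤ → ℤ → ℝ)
    (h0 : ∀ r s t : ℤ, (r < 0 ∨ s < 0 ∨ t < 0 ∨ r + s + t ≠ (k : ℤ)) → c r s t = 0)
    (hrec : ∀ r s t : ℤ, 0 ≤ r → 0 ≤ s → 0 ≤ t → r + s + t = (k : ℤ) - 1 →
      2 * ((r : ℝ) + 1) * (2 * ((r : ℝ) + 1) + n * (2 * lam - 1)) * c (r + 1) s t
        - ((s : ℝ) + 2) * ((s : ℝ) + 1) * c r (s + 2) (t - 1)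
        + 2 * ((s : ℝ) + 1) * ((s : ℝ) + 2 * t + n * mu) * c r (s + 1) t = 0) :
    ∀ i : ℕ, i ≤ k → (∀ j : ℕ, 1 ≤ j → j ≤ i → 2 * (j : ℝ) + n * (2 * lam - 1) ≠ 0) →
      c (i : ℤ) ((k : ℤ) - i) 0
        = (-1 : ℝ) ^ i * (k.choose i : ℝ) *
          ((∏ j ∈ Finset.Icc 1 i, ((k : ℝ) - j + n * mu)) /
            (∏ j ∈ Finset.Icc 1 i, (2 * (j : ℝ) + n * (2 * lam - 1)))) *
          c 0 (k : ℤ) 0 := by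
  intro i
  induction i with
  | zero => intro _ _; simp
  | succ i ih =>
    intro hik hne
    have hik' : i ≤ k := Nat.le_of_succ_le hik
    have ihv := ih hik' (fun j h1 h2 => hne j h1 (Nat.le_succ_of_le h2))
    have hs0 : (0 : ℤ) ≤ (k : ℤ) - 1 - i := by
      have : (i : ℤ) + 1 ≤ (k : ℤ) := by exact_mod_cast hik
      linarith
    have hR := hrec i ((k : ℤ) - 1 - i) 0 (by positivity) hs0 le_rfl (by ring)
    have hz : c i ((k : ℤ) - 1 - i + 2) (0 - 1) = 0 := by
      apply h0; right; right; left; norm_num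
    rw [hz] at hR
    have hA : 2 * ((i : ℝ) + 1) + (n : ℝ) * (2 * lam - 1) ≠ 0 := by
      have := hne (i + 1) (Nat.le_add_left 1 i) le_rfl
      push_cast at this; convert this using 2
    have hQ : (∏ j ∈ Finset.Icc 1 i, (2 * (j : ℝ) + n * (2 * lam - 1))) ≠ 0 :=
      Finset.prod_ne_zero_iff.mpr (fun j hj => hne j (Finset.mem_Icc.mp hj).1
        (Nat.le_succ_of_le (Finset.mem_Icc.mp hj).2))
    have hip : ((i : ℝ) + 1) ≠ 0 := by positivity
    have hden : 2 * ((i : ℝ) + 1) * (2 * ((i : ℝ) + 1) + n * (2 * lam - 1)) ≠ 0 :=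
      mul_ne_zero (mul_ne_zero two_ne_zero hip) hA
    have e1 : ((k : ℤ) - 1 - i : ℤ) + 1 = (k : ℤ) - i := by ring
    have e2 : ((i : ℤ) + 1) = ((i + 1 : ℕ) : ℤ) := by push_cast; ring
    have e3 : (k : ℤ) - 1 - i = (k : ℤ) - (i + 1 : ℕ) := by push_cast; ring
    have ecast : (((k : ℤ) - 1 - (i : ℤ) : ℤ) : ℝ) = (k : ℝ) - 1 - i := by push_cast; ring
    rw [e1, ecast, e2, e3] at hR
    push_cast at hR
    have key : c ((i + 1 : ℕ) : ℤ) ((k : ℤ) - (i + 1 : ℕ)) 0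
        = -(2 * ((k : ℝ) - i) * ((k : ℝ) - 1 - i + n * mu)) /
          (2 * ((i : ℝ) + 1) * (2 * ((i : ℝ) + 1) + n * (2 * lam - 1))) *
          c (i : ℤ) ((k : ℤ) - i) 0 := by
      rw [div_mul_eq_mul_div, eq_div_iff hden]
      push_cast
      linear_combination hR
    have hch : ((k.choose (i + 1) : ℝ)) = (k.choose i : ℝ) * ((k : ℝ) - i) / ((i : ℝ) + 1) := by
      have h2 : (k.choose (i+1)) * (i + 1) = k.choose i * (k - i) := by
        rw [Nat.choose_succ_right_eq]
      have h3 : ((k.choose (i+1) : ℝ)) * ((i : ℝ) + 1) = (k.choose i : ℝ) * (((k - i : ℕ)) : ℝ) := by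
        exact_mod_cast congrArg (Nat.cast : ℕ → ℝ) h2
      rw [Nat.cast_sub hik'] at h3
      field_simp
      linarith [h3]
    rw [key, ihv,
        Finset.prod_Icc_succ_top (Nat.le_add_left 1 i),
        Finset.prod_Icc_succ_top (Nat.le_add_left 1 i), hch]
    have hAi : 2 * (((i : ℝ)) + 1) + (n : ℝ) * (2 * lam - 1) ≠ 0 := hA
    push_cast
    field_simp
    ring



/-- A family `c : ℤ → ℤ → ℤ → ℝ` is a solution of the recurrence system (i)–(ii) of degree
`k` (with parameters `n, λ, μ`) if it vanishes outside `{r,s,t ≥ 0, r+s+t = k}` and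
satisfies, for all `r, s, t ≥ 0` with `r+s+t = k−1`:
(i)  `2(r+1)(2(r+1) + n(2λ−1))·c_{r+1,s,t} − (s+2)(s+1)·c_{r,s+2,t−1}
      + 2(s+1)(s + 2t + nμ)·c_{r,s+1,t} = 0`;
(ii) `2(t+1)(2(t+1) + n(2μ−1))·c_{r,s,t+1} − (s+2)(s+1)·c_{r−1,s+2,t}
      + 2(s+1)(s + 2r + nλ)·c_{r,s+1,t} = 0`. -/
def IsRecSol (k n : ℕ) (lam mu : ℝ) (c : ℤ → ℤ → ℤ → ℝ) : Prop :=
  (∀ r s t : ℤ, (r < 0 ∨ s < 0 ∨ t < 0 ∨ r + s + t ≠ (k : ℤ)) → c r s t = 0) ∧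
  (∀ r s t : ℤ, 0 ≤ r → 0 ≤ s → 0 ≤ t → r + s + t = (k : ℤ) - 1 →
    2 * ((r : ℝ) + 1) * (2 * ((r : ℝ) + 1) + n * (2 * lam - 1)) * c (r + 1) s t
      - ((s : ℝ) + 2) * ((s : ℝ) + 1) * c r (s + 2) (t - 1)
      + 2 * ((s : ℝ) + 1) * ((s : ℝ) + 2 * t + n * mu) * c r (s + 1) t = 0) ∧
  (∀ r s t : ℤ, 0 ≤ r → 0 ≤ s → 0 ≤ t → r + s + t = (k : ℤ) - 1 →
    2 * ((t : ℝ) + 1) * (2 * ((t : ℝ) + 1) + n * (2 * mu - 1)) * c r s (t + 1)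
      - ((s : ℝ) + 2) * ((s : ℝ) + 1) * c (r - 1) (s + 2) t
      + 2 * ((s : ℝ) + 1) * ((s : ℝ) + 2 * r + n * lam) * c r (s + 1) t = 0)

/-- Closed formula for the boundary coefficients of a solution of the recurrence system:
`c_{i,k−i,0} = (−1)^i C(k,i) (∏_{j=1}^{i}(k−j+nμ) / ∏_{j=1}^{i}(2j+n(2λ−1))) c_{0,k,0}`
whenever the denominators do not vanish, and symmetrically for `c_{0,k−i,i}`. -/
theorem recurrence_boundary_coefficients (k n : ℕ) (hn : 1 ≤ n) (lam mu : ℝ)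
    (c : ℤ → ℤ → ℤ → ℝ) (hc : IsRecSol k n lam mu c) (i : ℕ) (hik : i ≤ k) :
    ((∀ j : ℕ, 1 ≤ j → j ≤ i → 2 * (j : ℝ) + n * (2 * lam - 1) ≠ 0) →
      c (i : ℤ) ((k : ℤ) - i) 0
        = (-1 : ℝ) ^ i * (k.choose i : ℝ) *
          ((∏ j ∈ Finset.Icc 1 i, ((k : ℝ) - j + n * mu)) /
            (∏ j ∈ Finset.Icc 1 i, (2 * (j : ℝ) + n * (2 * lam - 1)))) *
          c 0 (k : ℤ) 0) ∧
    ((∀ j : ℕ, 1 ≤ j → j ≤ i → 2 * (j : ℝ) + n * (2 * mu - 1) ≠ 0) →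
      c 0 ((k : ℤ) - i) (i : ℤ)
        = (-1 : ℝ) ^ i * (k.choose i : ℝ) *
          ((∏ j ∈ Finset.Icc 1 i, ((k : ℝ) - j + n * lam)) /
            (∏ j ∈ Finset.Icc 1 i, (2 * (j : ℝ) + n * (2 * mu - 1)))) *
          c 0 (k : ℤ) 0) := by
  obtain ⟨h0, h1, h2⟩ := hc
  constructor
  · intro hne
    exact rec_aux k n lam mu c h0 h1 i hik hne
  · intro hne
    have h0' : ∀ r s t : ℤ, (r < 0 ∨ s < 0 ∨ t < 0 ∨ r + s + t ≠ (k : ℤ)) →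
        (fun r s t => c t s r) r s t = 0 := by
      intro r s t h
      apply h0
      rcases h with h | h | h | h
      · right; right; left; exact h
      · right; left; exact h
      · left; exact h
      · right; right; right; omega
    have h1' : ∀ r s t : ℤ, 0 ≤ r → 0 ≤ s → 0 ≤ t → r + s + t = (k : ℤ) - 1 →
        2 * ((r : ℝ) + 1) * (2 * ((r : ℝ) + 1) + n * (2 * mu - 1)) * (fun r s t => c t s r) (r + 1) s t
          - ((s : ℝ) + 2) * ((s : ℝ) + 1) * (fun r s t => c t s r) r (s + 2) (t - 1)
          + 2 * ((s : ℝ) + 1) * ((s : ℝ) + 2 * t + n * lam) * (fun r s t => c t s r) r (s + 1) t = 0 := by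
      intro r s t hr hs ht h
      simpa using h2 t s r ht hs hr (by omega)
    exact rec_aux k n mu lam (fun r s t => c t s r) h0' h1' i hik hne
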